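/- arXiv:2109.05306 — 7 statements merged into one kernel-verified Lean document; each statement's English description precedes it below -/
import Mathlib

section
/- Let L be a real symmetric n×n matrix and M = (e_a - e_b)(e_a - e_b)^T with a ≠ b. If L and M commute, then for every real t and real α, exp(-it(L + αM)) = exp(-itL)·[I + (1/2)(exp(-2iαt) - 1)M]. -/
/-! `M² = 2M`, so `P = M / 2` is an idempotent commuting with `L`. Hence the exponential splits as
`exp(-itL) · exp(-2iαt • P)`, and on an idempotent the exponential series collapses to
`exp(z • P) = (1 - P) + eᶻ • P`. -/

open Matrix Complex

theorem NormedSpace.exp_smul_of_isIdempotentElem {𝕂 A : Type*} [RCLike 𝕂] [NormedRing A]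
    [NormedAlgebra 𝕂 A] [CompleteSpace A] {P : A} (hP : IsIdempotentElem P) (x : 𝕂) :
    exp (x • P) = 1 - P + exp x • P := by
  have hpow (k : ℕ) : (x • P) ^ k = (0 : 𝕂) ^ k • (1 - P) + x ^ k • P := by
    cases k with
    | zero => simp
    | succ k => simp [smul_pow, hP.pow_succ_eq]
  have hzero := (exp_series_hasSum_exp' (𝕂 := 𝕂) (0 : 𝕂)).smul_const (1 - P)
  have hx := (exp_series_hasSum_exp' (𝕂 := 𝕂) x).smul_const P
  rw [exp_zero, one_smul] at hzero
  refine (exp_series_hasSum_exp' (𝕂 := 𝕂) (x • P)).unique ((hzero.add hx).congr_fun fun k => ?_)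
  simp only [hpow, smul_add, smul_smul, smul_eq_mul]

theorem Matrix.exp_smul_of_isIdempotentElem {m 𝕂 : Type*} [Fintype m] [DecidableEq m] [RCLike 𝕂]
    {P : Matrix m m 𝕂} (hP : IsIdempotentElem P) (x : 𝕂) :
    NormedSpace.exp (x • P) = 1 - P + NormedSpace.exp x • P :=
  open scoped Norms.Operator in NormedSpace.exp_smul_of_isIdempotentElem hP x

theorem Matrix.isIdempotentElem_inv_dotProduct_smul_vecMulVec {m K : Type*} [Fintype m] [Field K]
    {w : m → K} (hw : w ⬝ᵥ w ≠ 0) : IsIdempotentElem ((w ⬝ᵥ w)⁻¹ • vecMulVec w w) := by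
  rw [IsIdempotentElem, smul_mul_smul_comm, vecMulVec_mul_vecMulVec, vecMulVec_smul,
    smul_smul, mul_assoc, inv_mul_cancel₀ hw, mul_one]

theorem Matrix.single_sub_single_dotProduct_self {m R : Type*} [Fintype m] [DecidableEq m] [Ring R]
    {a b : m} (hab : a ≠ b) :
    (Pi.single a 1 - Pi.single b 1 : m → R) ⬝ᵥ (Pi.single a 1 - Pi.single b 1) = 2 := by
  simp [dotProduct_sub, hab, hab.symm, one_add_one_eq_two]

theorem exp_perturbed_laplacian_general {n : ℕ} (L : Matrix (Fin n) (Fin n) ℝ)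
    (a b : Fin n) (hab : a ≠ b) (t α : ℝ)
    (hcomm :
      L * vecMulVec (Pi.single a 1 - Pi.single b 1) (Pi.single a 1 - Pi.single b 1) =
      vecMulVec (Pi.single a 1 - Pi.single b 1) (Pi.single a 1 - Pi.single b 1) * L) :
    let M : Matrix (Fin n) (Fin n) ℂ :=
      vecMulVec (Pi.single a 1 - Pi.single b 1) (Pi.single a 1 - Pi.single b 1)
    NormedSpace.exp ((-(I * t)) • (L.map Complex.ofReal + (α : ℂ) • M)) =
      NormedSpace.exp ((-(I * t)) • L.map Complex.ofReal) *
        (1 + ((Complex.exp (-(2 * I * α * t)) - 1) / 2) • M) := by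
  intro M
  have hM : M = (vecMulVec (Pi.single a 1 - Pi.single b 1) (Pi.single a 1 - Pi.single b 1) :
      Matrix (Fin n) (Fin n) ℝ).map ofReal := by
    ext i j
    simp only [M, map_apply, vecMulVec_apply, Pi.sub_apply, Pi.single_apply]
    split_ifs <;> simp
  have hLM : Commute (L.map ofReal) M := by
    have := congrArg (Matrix.map · ofRealHom) hcomm
    rw [Matrix.map_mul, Matrix.map_mul] at this
    rw [hM]
    exact this
  have hdot : (Pi.single a 1 - Pi.single b 1 : Fin n → ℂ) ⬝ᵥ (Pi.single a 1 - Pi.single b 1) = 2 :=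
    single_sub_single_dotProduct_self hab
  have hP : IsIdempotentElem ((2 : ℂ)⁻¹ • M) := by
    have := isIdempotentElem_inv_dotProduct_smul_vecMulVec (hdot ▸ two_ne_zero)
    rwa [hdot] at this
  have hsplit : (-(I * t)) • (L.map ofReal + (α : ℂ) • M) =
      (-(I * t)) • L.map ofReal + (-(2 * I * α * t)) • ((2 : ℂ)⁻¹ • M) := by
    rw [smul_add, smul_smul, smul_smul]
    congr 2
    ring
  rw [hsplit, Matrix.exp_add_of_commute _ _ ((hLM.smul_right _).smul_left _ |>.smul_right _),
    Matrix.exp_smul_of_isIdempotentElem hP, ← Complex.exp_eq_exp_ℂ]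
  congr 1
  module

/-- If a real symmetric matrix `L` commutes with `M = (e_a - e_b)(e_a - e_b)ᵀ`
(`a ≠ b`), then for all real `t, α`,
`exp(-it(L+αM)) = exp(-itL) · (I + (1/2)(exp(-2iαt)-1) M)`. -/
theorem exp_perturbed_laplacian {n : ℕ} (L : Matrix (Fin n) (Fin n) ℝ)
    (hL : L.IsSymm) (a b : Fin n) (hab : a ≠ b) (t α : ℝ)
    (hcomm :
      L * vecMulVec (Pi.single a 1 - Pi.single b 1) (Pi.single a 1 - Pi.single b 1) =
      vecMulVec (Pi.single a 1 - Pi.single b 1) (Pi.single a 1 - Pi.single b 1) * L) :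
    let M : Matrix (Fin n) (Fin n) ℂ :=
      vecMulVec (Pi.single a 1 - Pi.single b 1) (Pi.single a 1 - Pi.single b 1)
    NormedSpace.exp ((-(I * t)) • (L.map Complex.ofReal + (α : ℂ) • M)) =
      NormedSpace.exp ((-(I * t)) • L.map Complex.ofReal) *
        (1 + ((Complex.exp (-(2 * I * α * t)) - 1) / 2) • M) :=
  exp_perturbed_laplacian_general L a b hab t α hcomm
end

section
/- Let L be a real symmetric matrix commuting with M = (e_a - e_b)(e_a - e_b)^T (a ≠ b), let α, τ ∈ R with ατ ∈ πZ, and set U(t) = exp(-itL), U^α(t) = exp(-it(L+αM)). Then U^α(τ) = U(τ). In particular, if e_b^T U(τ) e_a = γ for some unimodular γ (perfect state transfer between a and b at time τ in the unperturbed system), the same holds in the perturbed system. -/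
/-!
The perturbation `αM` commutes with `L`, so `U^α(τ) = U(τ) · exp(-iατ M)`. Since `M² = 2M`,
`P = M / 2` is idempotent and `exp(c P) = 1 + (eᶜ - 1) P`; with `c = -2iατ ∈ 2πiℤ` the second
factor is the identity.
-/

open Matrix Complex

theorem IsIdempotentElem.exp_smul {𝕂 𝔸 : Type*} [RCLike 𝕂] [Ring 𝔸] [Algebra 𝕂 𝔸]
    [TopologicalSpace 𝔸] [IsTopologicalRing 𝔸] [ContinuousSMul 𝕂 𝔸] [T2Space 𝔸]
    {p : 𝔸} (hp : IsIdempotentElem p) (c : 𝕂) :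
    NormedSpace.exp (c • p) = NormedSpace.exp c • p + (1 - p) := by
  have hpow (n : ℕ) : (c • p) ^ n = c ^ n • p + (0 : 𝕂) ^ n • (1 - p) := by
    cases n with
    | zero => simp
    | succ n => simp [smul_pow, hp.pow_succ_eq]
  have hsum := ((NormedSpace.exp_series_hasSum_exp' (𝕂 := 𝕂) c).smul_const p).add
    ((NormedSpace.exp_series_hasSum_exp' (𝕂 := 𝕂) (0 : 𝕂)).smul_const (1 - p))
  rw [NormedSpace.exp_zero, one_smul] at hsum
  rw [NormedSpace.exp_eq_tsum 𝕂]
  refine HasSum.tsum_eq ?_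
  convert hsum using 2 with n
  rw [hpow, smul_add, smul_assoc, smul_assoc]

theorem exp_smul_eq_one_of_mul_self_eq_smul {𝕂 𝔸 : Type*} [RCLike 𝕂] [Ring 𝔸] [Algebra 𝕂 𝔸]
    [TopologicalSpace 𝔸] [IsTopologicalRing 𝔸] [ContinuousSMul 𝕂 𝔸] [T2Space 𝔸]
    {q : 𝔸} {s : 𝕂} (hs : s ≠ 0) (hq : q * q = s • q) {c : 𝕂}
    (hc : NormedSpace.exp (c * s) = 1) : NormedSpace.exp (c • q) = 1 := by
  have hp : IsIdempotentElem (s⁻¹ • q) := by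
    rw [IsIdempotentElem, smul_mul_smul_comm, hq, smul_smul, inv_mul_cancel_right₀ hs]
  have hcq : c • q = (c * s) • (s⁻¹ • q) := by
    rw [smul_smul, mul_assoc, mul_inv_cancel₀ hs, mul_one]
  rw [hcq, hp.exp_smul, hc, one_smul, add_sub_cancel]

namespace Matrix

variable {m : Type*} [DecidableEq m]

theorem dotProduct_single_sub_single_self [Fintype m] {R : Type*} [Ring R] {a b : m}
    (hab : a ≠ b) :
    (Pi.single a 1 - Pi.single b 1 : m → R) ⬝ᵥ (Pi.single a 1 - Pi.single b 1) = 2 := by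
  norm_num [dotProduct_sub, hab, hab.symm]

theorem map_vecMulVec_single_sub_single {R S : Type*} [Ring R] [Ring S] (f : R →+* S)
    (a b : m) :
    (vecMulVec (Pi.single a 1 - Pi.single b 1) (Pi.single a 1 - Pi.single b 1)).map f =
      vecMulVec (Pi.single a 1 - Pi.single b 1) (Pi.single a 1 - Pi.single b 1) := by
  ext i j
  simp only [map_apply, vecMulVec_apply, Pi.sub_apply, Pi.single_apply]
  split_ifs <;> simp

end Matrix

theorem perturbed_transition_eq_of_alpha_tau_int_general {n : ℕ}
    (L : Matrix (Fin n) (Fin n) ℝ) (a b : Fin n) (hab : a ≠ b)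
    (α τ : ℝ) (hτ : ∃ k : ℤ, α * τ = k * Real.pi)
    (hcomm :
      L * vecMulVec (Pi.single a 1 - Pi.single b 1) (Pi.single a 1 - Pi.single b 1) =
      vecMulVec (Pi.single a 1 - Pi.single b 1) (Pi.single a 1 - Pi.single b 1) * L) :
    let M : Matrix (Fin n) (Fin n) ℂ :=
      vecMulVec (Pi.single a 1 - Pi.single b 1) (Pi.single a 1 - Pi.single b 1)
    NormedSpace.exp ((-(I * τ)) • (L.map Complex.ofReal + (α : ℂ) • M)) =
      NormedSpace.exp ((-(I * τ)) • L.map Complex.ofReal) ∧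
    ∀ γ : ℂ, ‖γ‖ = 1 →
      NormedSpace.exp ((-(I * τ)) • L.map Complex.ofReal) *ᵥ Pi.single a 1 =
        γ • (Pi.single b 1 : Fin n → ℂ) →
      NormedSpace.exp ((-(I * τ)) • (L.map Complex.ofReal + (α : ℂ) • M)) *ᵥ
        Pi.single a 1 = γ • (Pi.single b 1 : Fin n → ℂ) := by
  intro M
  obtain ⟨k, hk⟩ := hτ
  have hLM : Commute (L.map Complex.ofReal) M := by
    have h := congrArg Complex.ofRealHom.mapMatrix hcomm
    simp only [map_mul, RingHom.mapMatrix_apply, map_vecMulVec_single_sub_single] at h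
    exact h
  have hMM : M * M = (2 : ℂ) • M := by
    rw [vecMulVec_mul_vecMulVec, dotProduct_single_sub_single_self hab, vecMulVec_smul]
  have hphase : NormedSpace.exp (-(I * τ) * α * 2) = 1 := by
    rw [← Complex.exp_eq_exp_ℂ, ← Complex.exp_int_mul_two_pi_mul_I (-k)]
    congr 1
    have hk' : (α * τ : ℂ) = k * Real.pi := by exact_mod_cast congrArg Complex.ofReal hk
    push_cast
    linear_combination (-2 * I) * hk'
  have hU : NormedSpace.exp ((-(I * τ)) • (L.map Complex.ofReal + (α : ℂ) • M)) =
      NormedSpace.exp ((-(I * τ)) • L.map Complex.ofReal) := by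
    rw [smul_add, smul_smul, Matrix.exp_add_of_commute _ _ ((hLM.smul_right _).smul_left _),
      exp_smul_eq_one_of_mul_self_eq_smul two_ne_zero hMM hphase, mul_one]
  exact ⟨hU, fun γ _ h => hU ▸ h⟩

/-- If `L` is real symmetric and commutes with `M = (e_a - e_b)(e_a - e_b)ᵀ`
(`a ≠ b`), and `ατ ∈ πℤ`, then the perturbed transition matrix at time `τ`
equals the unperturbed one; in particular perfect state transfer between
`a` and `b` at time `τ` is preserved. -/
theorem perturbed_transition_eq_of_alpha_tau_int {n : ℕ}
    (L : Matrix (Fin n) (Fin n) ℝ) (hL : L.IsSymm) (a b : Fin n) (hab : a ≠ b)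
    (α τ : ℝ) (hτ : ∃ k : ℤ, α * τ = k * Real.pi)
    (hcomm :
      L * vecMulVec (Pi.single a 1 - Pi.single b 1) (Pi.single a 1 - Pi.single b 1) =
      vecMulVec (Pi.single a 1 - Pi.single b 1) (Pi.single a 1 - Pi.single b 1) * L) :
    let M : Matrix (Fin n) (Fin n) ℂ :=
      vecMulVec (Pi.single a 1 - Pi.single b 1) (Pi.single a 1 - Pi.single b 1)
    NormedSpace.exp ((-(I * τ)) • (L.map Complex.ofReal + (α : ℂ) • M)) =
      NormedSpace.exp ((-(I * τ)) • L.map Complex.ofReal) ∧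
    ∀ γ : ℂ, ‖γ‖ = 1 →
      NormedSpace.exp ((-(I * τ)) • L.map Complex.ofReal) *ᵥ Pi.single a 1 =
        γ • (Pi.single b 1 : Fin n → ℂ) →
      NormedSpace.exp ((-(I * τ)) • (L.map Complex.ofReal + (α : ℂ) • M)) *ᵥ
        Pi.single a 1 = γ • (Pi.single b 1 : Fin n → ℂ) :=
  perturbed_transition_eq_of_alpha_tau_int_general L a b hab α τ hτ hcomm
end

section
/- Let L be a real symmetric matrix commuting with M = (e_a - e_b)(e_a - e_b)^T (a ≠ b), and let q ∉ {a, b}. Then for all real t and α, exp(-it(L+αM)) e_q = exp(-itL) e_q. Hence any perfect state transfer of exp(-itL) between two vertices p, q both outside {a,b} is preserved under the perturbation L ↦ L + αM. -/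
/-! Because `L` commutes with `M`, `exp(-it(L + αM)) = exp(-itL) exp(-itαM)`, and `exp(-itαM)` fixes
`e_q` since `M e_q = 0` for `q ∉ {a, b}`. -/

open Matrix Complex

namespace Matrix

variable {ι 𝕂 : Type*} [Fintype ι] [DecidableEq ι] [RCLike 𝕂]

open scoped Norms.Operator in
theorem exp_mulVec_of_mulVec_eq_zero {A : Matrix ι ι 𝕂} {v : ι → 𝕂} (hv : A *ᵥ v = 0) :
    NormedSpace.exp A *ᵥ v = v := by
  have hpow : ∀ k, A ^ (k + 1) *ᵥ v = 0 := fun k => by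
    rw [pow_succ, ← mulVec_mulVec, hv, mulVec_zero]
  have hsum : HasSum (fun k : ℕ => ((k.factorial⁻¹ : 𝕂) • A ^ k) *ᵥ v)
      (NormedSpace.exp A *ᵥ v) :=
    (NormedSpace.exp_series_hasSum_exp' A).map (mulVec.addMonoidHomLeft v)
      (continuous_id.matrix_mulVec continuous_const)
  refine hsum.unique ?_
  convert hasSum_single (f := fun k : ℕ => ((k.factorial⁻¹ : 𝕂) • A ^ k) *ᵥ v) 0 fun k hk => ?_
  · simp
  · obtain ⟨k, rfl⟩ := Nat.exists_eq_succ_of_ne_zero hk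
    rw [smul_mulVec, hpow, smul_zero]

theorem exp_add_mulVec_of_mulVec_eq_zero {A B : Matrix ι ι 𝕂} {v : ι → 𝕂} (hAB : Commute A B)
    (hv : B *ᵥ v = 0) : NormedSpace.exp (A + B) *ᵥ v = NormedSpace.exp A *ᵥ v := by
  rw [exp_add_of_commute A B hAB, ← mulVec_mulVec, exp_mulVec_of_mulVec_eq_zero hv]

end Matrix

theorem perturbed_transition_outside_vertices_general {n : ℕ}
    (L : Matrix (Fin n) (Fin n) ℝ) (a b : Fin n)
    (hcomm :
      L * vecMulVec (Pi.single a 1 - Pi.single b 1) (Pi.single a 1 - Pi.single b 1) =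
      vecMulVec (Pi.single a 1 - Pi.single b 1) (Pi.single a 1 - Pi.single b 1) * L) :
    let M : Matrix (Fin n) (Fin n) ℂ :=
      vecMulVec (Pi.single a 1 - Pi.single b 1) (Pi.single a 1 - Pi.single b 1)
    (∀ (t α : ℝ) (q : Fin n), q ≠ a → q ≠ b →
      NormedSpace.exp ((-(I * t)) • (L.map Complex.ofReal + (α : ℂ) • M)) *ᵥ
          Pi.single q 1 =
        NormedSpace.exp ((-(I * t)) • L.map Complex.ofReal) *ᵥ Pi.single q 1) ∧
    ∀ (τ α : ℝ) (p q : Fin n), p ≠ a → p ≠ b → q ≠ a → q ≠ b →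
      ∀ γ : ℂ, ‖γ‖ = 1 →
        NormedSpace.exp ((-(I * τ)) • L.map Complex.ofReal) *ᵥ Pi.single q 1 =
          γ • (Pi.single p 1 : Fin n → ℂ) →
        NormedSpace.exp ((-(I * τ)) • (L.map Complex.ofReal + (α : ℂ) • M)) *ᵥ
          Pi.single q 1 = γ • (Pi.single p 1 : Fin n → ℂ) := by
  intro M
  have hM : Complex.ofRealHom.mapMatrix
      (vecMulVec (Pi.single a 1 - Pi.single b 1) (Pi.single a 1 - Pi.single b 1)) = M := by
    ext i j
    simp only [RingHom.mapMatrix_apply, map_apply, vecMulVec_apply, Pi.sub_apply,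
      Pi.single_apply, M]
    split_ifs <;> simp
  have hLM : Commute (L.map ofReal) M := hM ▸ Commute.map hcomm ofRealHom.mapMatrix
  have hMq (q : Fin n) (hqa : q ≠ a) (hqb : q ≠ b) : M *ᵥ Pi.single q 1 = 0 := by
    rw [vecMulVec_mulVec]
    simp [hqa, hqb]
  have unchanged (t α : ℝ) (q : Fin n) (hqa : q ≠ a) (hqb : q ≠ b) :
      NormedSpace.exp ((-(I * t)) • (L.map ofReal + (α : ℂ) • M)) *ᵥ Pi.single q 1 =
        NormedSpace.exp ((-(I * t)) • L.map ofReal) *ᵥ Pi.single q 1 := by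
    rw [smul_add, smul_smul]
    refine exp_add_mulVec_of_mulVec_eq_zero ((hLM.smul_right _).smul_left _) ?_
    rw [smul_mulVec, hMq q hqa hqb, smul_zero]
  refine ⟨unchanged, fun τ α p q _ _ hqa hqb γ _ hpst => ?_⟩
  rw [unchanged τ α q hqa hqb, hpst]

/-- If `L` is real symmetric and commutes with `M = (e_a - e_b)(e_a - e_b)ᵀ`
(`a ≠ b`) and `q ∉ {a,b}`, then `exp(-it(L+αM)) e_q = exp(-itL) e_q` for all
`t, α`; hence perfect state transfer between two vertices `p, q` outside
`{a,b}` is preserved under the perturbation. -/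
theorem perturbed_transition_outside_vertices {n : ℕ}
    (L : Matrix (Fin n) (Fin n) ℝ) (hL : L.IsSymm) (a b : Fin n) (hab : a ≠ b)
    (hcomm :
      L * vecMulVec (Pi.single a 1 - Pi.single b 1) (Pi.single a 1 - Pi.single b 1) =
      vecMulVec (Pi.single a 1 - Pi.single b 1) (Pi.single a 1 - Pi.single b 1) * L) :
    let M : Matrix (Fin n) (Fin n) ℂ :=
      vecMulVec (Pi.single a 1 - Pi.single b 1) (Pi.single a 1 - Pi.single b 1)
    (∀ (t α : ℝ) (q : Fin n), q ≠ a → q ≠ b →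
      NormedSpace.exp ((-(I * t)) • (L.map Complex.ofReal + (α : ℂ) • M)) *ᵥ
          Pi.single q 1 =
        NormedSpace.exp ((-(I * t)) • L.map Complex.ofReal) *ᵥ Pi.single q 1) ∧
    ∀ (τ α : ℝ) (p q : Fin n), p ≠ a → p ≠ b → q ≠ a → q ≠ b →
      ∀ γ : ℂ, ‖γ‖ = 1 →
        NormedSpace.exp ((-(I * τ)) • L.map Complex.ofReal) *ᵥ Pi.single q 1 =
          γ • (Pi.single p 1 : Fin n → ℂ) →
        NormedSpace.exp ((-(I * τ)) • (L.map Complex.ofReal + (α : ℂ) • M)) *ᵥ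
          Pi.single q 1 = γ • (Pi.single p 1 : Fin n → ℂ) :=
  perturbed_transition_outside_vertices_general L a b hcomm
end

section
/- Let L be a real symmetric matrix commuting with M = (e_a - e_b)(e_a - e_b)^T (a ≠ b), and let p ∉ {a,b}. If exp(-iτL) e_p = γ e_p for some complex γ, then also exp(-iτ(L+αM)) e_p = γ e_p for every real α: periodicity at vertices outside {a,b} is preserved under the perturbation. -/
/-!
Because `M` kills `e_p` and commutes with `L`, the exponential splits as
`exp(-iτL) exp(-iταM)`, and the second factor fixes `e_p`.
-/

open Matrix Complex Nat

namespace Matrix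

variable {ι 𝕂 : Type*} [Fintype ι] [DecidableEq ι] [RCLike 𝕂]

theorem exp_mulVec_eq_self_of_mulVec_eq_zero {B : Matrix ι ι 𝕂} {v : ι → 𝕂}
    (hB : B *ᵥ v = 0) : NormedSpace.exp B *ᵥ v = v := by
  have hexp : HasSum (fun k => ((k ! : 𝕂)⁻¹ • B ^ k) *ᵥ v) (NormedSpace.exp B *ᵥ v) :=
    open scoped Norms.Operator in
    (NormedSpace.exp_series_hasSum_exp' (𝕂 := 𝕂) B).map (mulVec.addMonoidHomLeft v)
      (continuous_id.matrix_mulVec continuous_const)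
  refine hexp.unique (hasSum_single 0 fun k hk => ?_) |>.trans ?_
  · obtain ⟨j, rfl⟩ := Nat.exists_eq_succ_of_ne_zero hk
    rw [smul_mulVec, pow_succ, ← mulVec_mulVec, hB, mulVec_zero, smul_zero]
  · simp

theorem exp_add_mulVec_of_commute {A B : Matrix ι ι 𝕂} (hAB : Commute A B) {v : ι → 𝕂}
    (hB : B *ᵥ v = 0) : NormedSpace.exp (A + B) *ᵥ v = NormedSpace.exp A *ᵥ v := by
  rw [exp_add_of_commute A B hAB, ← mulVec_mulVec, exp_mulVec_eq_self_of_mulVec_eq_zero hB]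

end Matrix

theorem periodicity_preserved_outside_general {n : ℕ}
    (L : Matrix (Fin n) (Fin n) ℝ) (a b : Fin n)
    (hcomm :
      L * vecMulVec (Pi.single a 1 - Pi.single b 1) (Pi.single a 1 - Pi.single b 1) =
      vecMulVec (Pi.single a 1 - Pi.single b 1) (Pi.single a 1 - Pi.single b 1) * L)
    (p : Fin n) (hpa : p ≠ a) (hpb : p ≠ b) (α τ : ℝ) (γ : ℂ)
    (hper : NormedSpace.exp ((-(I * τ)) • L.map Complex.ofReal) *ᵥ Pi.single p 1 =
      γ • (Pi.single p 1 : Fin n → ℂ)) :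
    NormedSpace.exp ((-(I * τ)) •
        (L.map Complex.ofReal + (α : ℂ) •
          vecMulVec (Pi.single a 1 - Pi.single b 1) (Pi.single a 1 - Pi.single b 1))) *ᵥ
      Pi.single p 1 = γ • (Pi.single p 1 : Fin n → ℂ) := by
  set u : Fin n → ℂ := Pi.single a 1 - Pi.single b 1
  have hM : (vecMulVec (Pi.single a 1 - Pi.single b 1) (Pi.single a 1 - Pi.single b 1) :
      Matrix (Fin n) (Fin n) ℝ).map ofReal = vecMulVec u u := by
    ext i j
    simp [u, vecMulVec_apply, Pi.single_apply, apply_ite ofReal]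
  have hcommℂ : Commute (L.map ofReal) (vecMulVec u u) :=
    hM ▸ (show Commute _ _ from hcomm).map ofRealHom.mapMatrix
  have hMp : vecMulVec u u *ᵥ Pi.single p 1 = 0 := by
    have hup : u p = 0 := by simp [u, hpa, hpb]
    rw [vecMulVec_mulVec, dotProduct_single, hup, zero_mul, MulOpposite.op_zero, zero_smul]
  rw [smul_add, exp_add_mulVec_of_commute
    (((hcommℂ.smul_right (α : ℂ)).smul_right (-(I * τ))).smul_left (-(I * τ)))]
  · exact hper
  · rw [smul_mulVec, smul_mulVec, hMp, smul_zero, smul_zero]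

/-- If `L` is real symmetric, commutes with `M = (e_a - e_b)(e_a - e_b)ᵀ`
(`a ≠ b`), and `p ∉ {a,b}`, then periodicity at `p` is preserved under the
perturbation `L ↦ L + αM`. -/
theorem periodicity_preserved_outside {n : ℕ}
    (L : Matrix (Fin n) (Fin n) ℝ) (hL : L.IsSymm) (a b : Fin n) (hab : a ≠ b)
    (hcomm :
      L * vecMulVec (Pi.single a 1 - Pi.single b 1) (Pi.single a 1 - Pi.single b 1) =
      vecMulVec (Pi.single a 1 - Pi.single b 1) (Pi.single a 1 - Pi.single b 1) * L)
    (p : Fin n) (hpa : p ≠ a) (hpb : p ≠ b) (α τ : ℝ) (γ : ℂ)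
    (hper : NormedSpace.exp ((-(I * τ)) • L.map Complex.ofReal) *ᵥ Pi.single p 1 =
      γ • (Pi.single p 1 : Fin n → ℂ)) :
    NormedSpace.exp ((-(I * τ)) •
        (L.map Complex.ofReal + (α : ℂ) •
          vecMulVec (Pi.single a 1 - Pi.single b 1) (Pi.single a 1 - Pi.single b 1))) *ᵥ
      Pi.single p 1 = γ • (Pi.single p 1 : Fin n → ℂ) :=
  periodicity_preserved_outside_general L a b hcomm p hpa hpb α τ γ hper
end

section
/- For the complete graph K_n with n ≥ 1 and any two distinct vertices a, b and any real t, the magnitude of the (b,a) entry of the Laplacian transition matrix satisfies |e_b^T exp(-itL) e_a| ≤ 2/n, where L = nI - J. Consequently, K_n with n ≥ 3 admits no Laplacian perfect state transfer between any pair of distinct vertices. -/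
/-! The Laplacian of `K_n` is `L = n • Q` with `Q = 1 - J / n` idempotent, so
`exp (-itL) = (1 - Q) + e^{-itn} • Q`. Its off-diagonal entries are `(1 - e^{-itn}) / n`, of modulus
at most `2 / n < 1` once `n ≥ 3`, whereas perfect state transfer needs an entry of modulus one. -/

open Matrix Complex

section IdempotentExp

variable {𝕂 A : Type*} [RCLike 𝕂] [Ring A] [Algebra 𝕂 A] [TopologicalSpace A]
  [IsTopologicalRing A] [ContinuousSMul 𝕂 A] [T2Space A]

theorem IsIdempotentElem.exp_smul_s11 {P : A} (hP : IsIdempotentElem P) (x : 𝕂) :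
    NormedSpace.exp (x • P) = 1 - P + NormedSpace.exp x • P := by
  rw [NormedSpace.exp_eq_tsum 𝕂]
  refine HasSum.tsum_eq ?_
  convert (hasSum_ite_eq 0 (1 - P)).add
    ((NormedSpace.exp_series_hasSum_exp' (𝕂 := 𝕂) x).smul_const P) using 1
  funext k
  cases k with
  | zero => simp
  | succ k => simp [smul_pow, hP.pow_succ_eq, smul_smul]

end IdempotentExp

section CompleteGraph

theorem Matrix.of_one_mul_of_one {m R : Type*} [Fintype m] [NonAssocSemiring R] :
    (of fun _ _ : m => (1 : R)) * of (fun _ _ => 1) = (Fintype.card m : R) • of fun _ _ => 1 := by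
  ext i j
  simp [mul_apply]

variable {m 𝕂 : Type*} [Fintype m] [DecidableEq m] [RCLike 𝕂]

theorem Matrix.isIdempotentElem_one_sub_inv_card_smul_of_one (hm : (Fintype.card m : 𝕂) ≠ 0) :
    IsIdempotentElem (1 - (Fintype.card m : 𝕂)⁻¹ • of fun _ _ : m => (1 : 𝕂)) := by
  refine IsIdempotentElem.one_sub ?_
  rw [IsIdempotentElem, smul_mul_smul, of_one_mul_of_one, smul_smul, mul_assoc,
    inv_mul_cancel₀ hm, mul_one]

theorem Matrix.exp_smul_completeLaplacian_apply_of_ne (z : 𝕂) {a b : m} (hab : a ≠ b) :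
    NormedSpace.exp (z • ((Fintype.card m : 𝕂) • 1 - of fun _ _ => (1 : 𝕂))) b a =
      (1 - NormedSpace.exp (z * Fintype.card m)) / Fintype.card m := by
  have hm : (Fintype.card m : 𝕂) ≠ 0 := Nat.cast_ne_zero.2 (Fintype.card_pos_iff.2 ⟨a⟩).ne'
  have hL : z • ((Fintype.card m : 𝕂) • 1 - of fun _ _ : m => (1 : 𝕂)) =
      (z * Fintype.card m) • (1 - (Fintype.card m : 𝕂)⁻¹ • of fun _ _ => (1 : 𝕂)) := by
    rw [smul_sub, smul_sub, smul_smul, smul_smul, mul_assoc, mul_inv_cancel₀ hm, mul_one,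
      mul_smul]
  rw [hL, (isIdempotentElem_one_sub_inv_card_smul_of_one hm).exp_smul_s11]
  simp [one_apply_ne hab.symm]
  ring

end CompleteGraph

theorem Complex.norm_one_sub_exp_le_two_of_re_eq_zero {z : ℂ} (hz : z.re = 0) :
    ‖1 - exp z‖ ≤ 2 := by
  calc ‖1 - exp z‖ ≤ ‖(1 : ℂ)‖ + ‖exp z‖ := norm_sub_le _ _
    _ = 2 := by rw [norm_exp, hz]; norm_num

theorem complete_graph_no_pst_general {n : ℕ} :
    let L : Matrix (Fin n) (Fin n) ℂ :=
      (n : ℂ) • 1 - Matrix.of fun _ _ => (1 : ℂ)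
    (∀ (a b : Fin n), a ≠ b → ∀ t : ℝ,
      ‖NormedSpace.exp ((-(I * t)) • L) b a‖ ≤ 2 / n) ∧
    (3 ≤ n → ∀ (a b : Fin n), a ≠ b → ∀ (t : ℝ) (γ : ℂ), ‖γ‖ = 1 →
      NormedSpace.exp ((-(I * t)) • L) *ᵥ Pi.single a 1 ≠ γ • (Pi.single b 1 : Fin n → ℂ)) := by
  intro L
  have entry_le (a b : Fin n) (hab : a ≠ b) (t : ℝ) :
      ‖NormedSpace.exp ((-(I * t)) • L) b a‖ ≤ 2 / n := by
    have h : NormedSpace.exp ((-(I * t)) • L) b a = (1 - exp (-(I * t) * n)) / n := by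
      simpa only [Fintype.card_fin, ← exp_eq_exp_ℂ] using
        exp_smul_completeLaplacian_apply_of_ne (-(I * t)) hab
    rw [h, norm_div, norm_natCast]
    gcongr
    exact norm_one_sub_exp_le_two_of_re_eq_zero (by simp)
  refine ⟨entry_le, fun hn a b hab t γ hγ hpst => ?_⟩
  have hγ_entry : NormedSpace.exp ((-(I * t)) • L) b a = γ := by
    simpa [mulVec_single_one] using congrFun hpst b
  have h2n : (2 : ℝ) / n < 1 := by
    rw [div_lt_one (by positivity)]
    exact_mod_cast hn
  have h_one_le := entry_le a b hab t
  rw [hγ_entry, hγ] at h_one_le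
  linarith

/-- For `K_n` (`n ≥ 1`) with Laplacian `L = nI - J` and distinct vertices
`a, b`, `|e_bᵀ exp(-itL) e_a| ≤ 2/n` for all `t`; consequently for `n ≥ 3`
there is no Laplacian perfect state transfer between distinct vertices. -/
theorem complete_graph_no_pst {n : ℕ} (hn : 1 ≤ n) :
    let L : Matrix (Fin n) (Fin n) ℂ :=
      (n : ℂ) • 1 - Matrix.of fun _ _ => (1 : ℂ)
    (∀ (a b : Fin n), a ≠ b → ∀ t : ℝ,
      ‖NormedSpace.exp ((-(I * t)) • L) b a‖ ≤ 2 / n) ∧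
    (3 ≤ n → ∀ (a b : Fin n), a ≠ b → ∀ (t : ℝ) (γ : ℂ), ‖γ‖ = 1 →
      NormedSpace.exp ((-(I * t)) • L) *ᵥ Pi.single a 1 ≠ γ • (Pi.single b 1 : Fin n → ℂ)) :=
  complete_graph_no_pst_general
end

section
/- Let n be divisible by 4 and let L be the Laplacian of K_n. For any pair of distinct vertices a, b, the graph K_n minus the edge {a,b}, with Laplacian L' = L - (e_a - e_b)(e_a - e_b)^T, exhibits Laplacian perfect state transfer between a and b at time π/2: exp(-i(π/2)L') e_a = γ e_b for some unimodular complex γ. -/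
/-!
The Laplacian `L'` of `K_n` minus the edge `{a, b}` has the eigenvectors `𝟙` (eigenvalue `0`),
`e_a - e_b` (eigenvalue `n - 2`) and `n (e_a + e_b) - 2 𝟙` (eigenvalue `n`). At time `π/2` and
with `4 ∣ n`, the phases `exp (-i (π/2) λ)` are `1, -1, 1` respectively, so `exp (-i (π/2) L')`
fixes `e_a + e_b`, which lies in the span of `𝟙` and `n (e_a + e_b) - 2 𝟙`, and negates
`e_a - e_b`; hence it sends `e_a` to `e_b`.
-/

open Matrix Complex

namespace Matrix

variable {m : Type*} [Fintype m]

theorem pow_mulVec_of_mulVec_eq_smul [DecidableEq m] {R : Type*} [CommSemiring R]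
    {A : Matrix m m R} {x : m → R} {c : R} (h : A *ᵥ x = c • x) (k : ℕ) :
    A ^ k *ᵥ x = c ^ k • x := by
  induction k with
  | zero => simp
  | succ k ih => rw [pow_succ', ← mulVec_mulVec, ih, mulVec_smul, h, smul_smul, ← pow_succ]

section LinftyOp

attribute [local instance] Matrix.linftyOpNormedRing Matrix.linftyOpNormedAlgebra

theorem exp_mulVec_of_mulVec_eq_smul [DecidableEq m] {𝕂 : Type*} [RCLike 𝕂]
    {A : Matrix m m 𝕂} {x : m → 𝕂} {c : 𝕂} (h : A *ᵥ x = c • x) :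
    NormedSpace.exp A *ᵥ x = NormedSpace.exp c • x := by
  have hA := (NormedSpace.exp_series_hasSum_exp' (𝕂 := 𝕂) A).map (mulVec.addMonoidHomLeft x)
    (continuous_id.matrix_mulVec continuous_const)
  have hc := (NormedSpace.exp_series_hasSum_exp' (𝕂 := 𝕂) c).smul_const x
  refine hA.unique (hc.congr_fun fun k => ?_)
  change ((k.factorial : 𝕂)⁻¹ • A ^ k) *ᵥ x = _
  rw [smul_mulVec, pow_mulVec_of_mulVec_eq_smul h, smul_smul, smul_eq_mul]

end LinftyOp

theorem mulVec_eq_of_mulVec_add_of_mulVec_sub {K : Type*} [Field K] [NeZero (2 : K)]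
    {E : Matrix m m K} {v w : m → K} (hadd : E *ᵥ (v + w) = v + w)
    (hsub : E *ᵥ (v - w) = -(v - w)) : E *ᵥ v = w := by
  have h2 : (2 : K) • E *ᵥ v = (2 : K) • w := by
    rw [two_smul, two_smul, ← mulVec_add]
    calc E *ᵥ (v + v) = E *ᵥ (v + w) + E *ᵥ (v - w) := by
          rw [← mulVec_add, add_add_sub_cancel]
      _ = w + w := by rw [hadd, hsub]; abel
  exact smul_right_injective _ two_ne_zero h2

end Matrix

def completeGraphDeleteEdgeLapMatrix (R : Type*) [CommRing R] (n : ℕ) (a b : Fin n) :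
    Matrix (Fin n) (Fin n) R :=
  ((n : R) • 1 - Matrix.of fun _ _ => (1 : R)) -
    vecMulVec (Pi.single a 1 - Pi.single b 1) (Pi.single a 1 - Pi.single b 1)

namespace completeGraphDeleteEdgeLapMatrix

variable {R : Type*} [CommRing R] {n : ℕ} (a b : Fin n)

theorem mulVec (x : Fin n → R) :
    completeGraphDeleteEdgeLapMatrix R n a b *ᵥ x =
      (n : R) • x - (∑ i, x i) • 1 - (x a - x b) • (Pi.single a 1 - Pi.single b 1) := by
  have hJ : (Matrix.of fun _ _ => (1 : R) : Matrix (Fin n) (Fin n) R) = vecMulVec 1 1 := by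
    ext; simp [vecMulVec_apply]
  rw [completeGraphDeleteEdgeLapMatrix, sub_mulVec, sub_mulVec, smul_mulVec, one_mulVec, hJ,
    vecMulVec_mulVec, vecMulVec_mulVec, one_dotProduct, sub_dotProduct, single_one_dotProduct,
    single_one_dotProduct, op_smul_eq_smul, op_smul_eq_smul]

theorem mulVec_one : completeGraphDeleteEdgeLapMatrix R n a b *ᵥ 1 = (0 : R) • 1 := by
  rw [mulVec]; simp

theorem mulVec_single_sub_single :
    completeGraphDeleteEdgeLapMatrix R n a b *ᵥ (Pi.single a 1 - Pi.single b 1) =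
      ((n : R) - 2) • (Pi.single a 1 - Pi.single b 1) := by
  rcases eq_or_ne a b with rfl | hab
  · simp
  · rw [mulVec]
    simp [Finset.sum_sub_distrib, hab, hab.symm]
    module

theorem mulVec_nsmul_single_add_single_sub_two :
    completeGraphDeleteEdgeLapMatrix R n a b *ᵥ
        ((n : R) • (Pi.single a 1 + Pi.single b 1) - 2 • 1) =
      (n : R) • ((n : R) • (Pi.single a 1 + Pi.single b 1) - 2 • 1) := by
  set u : Fin n → R := (n : R) • (Pi.single a 1 + Pi.single b 1) - 2 • 1
  have hsum : ∑ i, u i = 0 := by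
    simp [u, Finset.sum_add_distrib, Finset.sum_sub_distrib, ← Finset.mul_sum]
    ring
  have hab : u a = u b := by simp [u, Pi.single_apply, eq_comm, add_comm]
  rw [mulVec, hsum, hab, sub_self, zero_smul, zero_smul, sub_zero, sub_zero]

end completeGraphDeleteEdgeLapMatrix

theorem Complex.exp_neg_I_mul_pi_div_two_mul_natCast {n : ℕ} (hn : 4 ∣ n) :
    Complex.exp (-(I * (Real.pi / 2)) * n) = 1 := by
  obtain ⟨k, rfl⟩ := hn
  rw [show -(I * (Real.pi / 2)) * ((4 * k : ℕ) : ℂ) = (-k : ℤ) * (2 * Real.pi * I) by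
    push_cast; ring, Complex.exp_int_mul_two_pi_mul_I]

theorem Complex.exp_neg_I_mul_pi_div_two_mul_natCast_sub_two {n : ℕ} (hn : 4 ∣ n) :
    Complex.exp (-(I * (Real.pi / 2)) * (n - 2)) = -1 := by
  rw [show -(I * (Real.pi / 2)) * (n - 2) = -(I * (Real.pi / 2)) * n + Real.pi * I by ring,
    Complex.exp_add, Complex.exp_neg_I_mul_pi_div_two_mul_natCast hn, Complex.exp_pi_mul_I,
    one_mul]

theorem complete_graph_minus_edge_pst_general {n : ℕ} (hn : 4 ∣ n) (a b : Fin n) :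
    let L' : Matrix (Fin n) (Fin n) ℂ :=
      ((n : ℂ) • 1 - Matrix.of fun _ _ => (1 : ℂ)) -
        vecMulVec (Pi.single a 1 - Pi.single b 1) (Pi.single a 1 - Pi.single b 1)
    ∃ γ : ℂ, ‖γ‖ = 1 ∧
      NormedSpace.exp ((-(I * (Real.pi / 2))) • L') *ᵥ Pi.single a 1 =
        γ • (Pi.single b 1 : Fin n → ℂ) := by
  intro L'
  set t : ℂ := -(I * (Real.pi / 2))
  set E := NormedSpace.exp (t • L')
  have hE {x : Fin n → ℂ} {c : ℂ} (h : L' *ᵥ x = c • x) :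
      E *ᵥ x = Complex.exp (t * c) • x := by
    rw [Complex.exp_eq_exp_ℂ]
    exact exp_mulVec_of_mulVec_eq_smul (by rw [smul_mulVec, h, smul_smul])
  have hone : E *ᵥ 1 = 1 := by
    rw [hE (completeGraphDeleteEdgeLapMatrix.mulVec_one a b), mul_zero, Complex.exp_zero,
      one_smul]
  have hu := hE (completeGraphDeleteEdgeLapMatrix.mulVec_nsmul_single_add_single_sub_two a b)
  rw [Complex.exp_neg_I_mul_pi_div_two_mul_natCast hn, one_smul] at hu
  have hd := hE (completeGraphDeleteEdgeLapMatrix.mulVec_single_sub_single a b)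
  rw [Complex.exp_neg_I_mul_pi_div_two_mul_natCast_sub_two hn, neg_one_smul] at hd
  have hadd : E *ᵥ (Pi.single a 1 + Pi.single b 1) = Pi.single a 1 + Pi.single b 1 := by
    have hsplit : (n : ℂ) • (Pi.single a 1 + Pi.single b 1 : Fin n → ℂ) =
        ((n : ℂ) • (Pi.single a 1 + Pi.single b 1) - 2 • 1) + 2 • 1 := by abel
    refine smul_right_injective _ (Nat.cast_ne_zero.2 a.pos.ne' : (n : ℂ) ≠ 0) ?_
    dsimp only
    rw [← mulVec_smul, hsplit, mulVec_add, mulVec_smul, hu, hone]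
  exact ⟨1, norm_one, by rw [one_smul]; exact mulVec_eq_of_mulVec_add_of_mulVec_sub hadd hd⟩

/-- For `4 ∣ n` and distinct vertices `a, b`, the complete graph `K_n` with the
edge `{a,b}` deleted (Laplacian `L' = (nI - J) - (e_a-e_b)(e_a-e_b)ᵀ`) exhibits
Laplacian perfect state transfer between `a` and `b` at time `π/2`. -/
theorem complete_graph_minus_edge_pst {n : ℕ} (hn : 4 ∣ n) (a b : Fin n)
    (hab : a ≠ b) :
    let L' : Matrix (Fin n) (Fin n) ℂ :=
      ((n : ℂ) • 1 - Matrix.of fun _ _ => (1 : ℂ)) -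
        vecMulVec (Pi.single a 1 - Pi.single b 1) (Pi.single a 1 - Pi.single b 1)
    ∃ γ : ℂ, ‖γ‖ = 1 ∧
      NormedSpace.exp ((-(I * (Real.pi / 2))) • L') *ᵥ Pi.single a 1 =
        γ • (Pi.single b 1 : Fin n → ℂ) :=
  complete_graph_minus_edge_pst_general hn a b
end

section
/- Let n be divisible by 4 and let F be a set of pairwise disjoint edges (a perfect or partial matching) of the complete graph K_n. Let L' be the Laplacian of K_n with all edges of F deleted. Then for each edge {a,b} ∈ F, exp(-i(π/2)L') e_a = γ e_b for some unimodular γ; i.e., Laplacian perfect state transfer occurs at time π/2 between the endpoints of every deleted edge. -/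
/-!
For an edge `{a, b} ∈ F` the vectors `1`, `e_a - e_b` and `n (e_a + e_b) - 2·1` are eigenvectors
of `L'` with eigenvalues `0`, `n - 2` and `n`. When `4 ∣ n`, `exp (-i π/2 · λ)` equals `1`, `-1`
and `1` for these eigenvalues, so `exp (-i π/2 L')` fixes `e_a + e_b` and negates `e_a - e_b`;
hence it maps `e_a` to `e_b`, and `γ = 1`.
-/

open Matrix Complex

theorem Matrix.exp_mulVec_of_mulVec_eq_smul_s14 {ι 𝕂 : Type*} [Fintype ι] [DecidableEq ι]
    [RCLike 𝕂] {A : Matrix ι ι 𝕂} {v : ι → 𝕂} {μ : 𝕂} (h : A *ᵥ v = μ • v) :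
    NormedSpace.exp A *ᵥ v = NormedSpace.exp μ • v := by
  have hpow (k : ℕ) : A ^ k *ᵥ v = μ ^ k • v := by
    induction k with
    | zero => simp
    | succ k ih => rw [pow_succ, ← mulVec_mulVec, h, mulVec_smul, ih, smul_smul, pow_succ']
  let applyTo : Matrix ι ι 𝕂 →ₗ[𝕂] ι → 𝕂 := LinearMap.applyₗ v ∘ₗ toLin'.toLinearMap
  open scoped Norms.Operator in
  have hA := (NormedSpace.exp_series_hasSum_exp' (𝕂 := 𝕂) A).map applyTo
    applyTo.continuous_of_finiteDimensional
  refine hA.unique ?_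
  convert (NormedSpace.exp_series_hasSum_exp' (𝕂 := 𝕂) μ).smul_const v using 1
  ext k : 1
  simp only [applyTo, LinearMap.coe_comp, LinearEquiv.coe_coe, Function.comp_apply, map_smul,
    LinearMap.applyₗ_apply_apply, toLin'_apply, hpow, smul_smul, smul_eq_mul]

theorem Matrix.exp_smul_mulVec_of_mulVec_eq_smul {ι 𝕂 : Type*} [Fintype ι] [DecidableEq ι]
    [RCLike 𝕂] {A : Matrix ι ι 𝕂} {v : ι → 𝕂} {μ : 𝕂} (h : A *ᵥ v = μ • v) (t : 𝕂) :
    NormedSpace.exp (t • A) *ᵥ v = NormedSpace.exp (t * μ) • v :=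
  exp_mulVec_of_mulVec_eq_smul_s14 (by rw [smul_mulVec, h, smul_smul])

theorem Matrix.mulVec_eq_of_mulVec_add_of_mulVec_sub_s14 {ι K : Type*} [Fintype ι] [Field K]
    [NeZero (2 : K)] {U : Matrix ι ι K} {x y : ι → K} (hadd : U *ᵥ (x + y) = x + y)
    (hsub : U *ᵥ (x - y) = -(x - y)) : U *ᵥ x = y := by
  have h2 : (2 : K) • (U *ᵥ x) = (2 : K) • y :=
    calc (2 : K) • (U *ᵥ x) = U *ᵥ (x + y) + U *ᵥ (x - y) := by
          rw [← mulVec_smul, ← mulVec_add]; congr 1; module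
      _ = (2 : K) • y := by rw [hadd, hsub]; module
  exact smul_right_injective _ two_ne_zero h2

theorem Complex.exp_neg_I_pi_div_two_mul_natCast {m : ℕ} (hm : 4 ∣ m) :
    exp (-(I * (Real.pi / 2)) * m) = 1 := by
  obtain ⟨k, rfl⟩ := hm
  rw [← exp_int_mul_two_pi_mul_I (-k)]
  congr 1
  push_cast
  ring

theorem Complex.exp_neg_I_pi_div_two_mul_natCast_sub_two {m : ℕ} (hm : 4 ∣ m) :
    exp (-(I * (Real.pi / 2)) * (m - 2)) = -1 := by
  rw [show -(I * (Real.pi / 2)) * (m - 2) = -(I * (Real.pi / 2)) * m + Real.pi * I by ring,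
    exp_add, exp_neg_I_pi_div_two_mul_natCast hm, exp_pi_mul_I, one_mul]

section Laplacian

variable {ι R : Type*} [Fintype ι] [DecidableEq ι] [CommRing R]

def edgeVec (a b : ι) : ι → R := Pi.single a 1 - Pi.single b 1

/-- The matrix `L'`; it is the Laplacian of `K_n` minus `F` only when `F` is a matching. -/
def completeMinusLaplacian (F : Finset (ι × ι)) : Matrix ι ι R :=
  ((Fintype.card ι : R) • 1 - of fun _ _ => 1) -
    ∑ e ∈ F, vecMulVec (edgeVec e.1 e.2) (edgeVec e.1 e.2)

theorem edgeVec_dotProduct_single (a b i : ι) :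
    edgeVec a b ⬝ᵥ (Pi.single i 1 : ι → R) =
      (if i = a then 1 else 0) - if i = b then 1 else 0 := by
  simp [edgeVec, Pi.single_apply]

theorem edgeVec_dotProduct_single_of_ne {a b i : ι} (ha : i ≠ a) (hb : i ≠ b) :
    edgeVec a b ⬝ᵥ (Pi.single i 1 : ι → R) = 0 := by
  rw [edgeVec_dotProduct_single, if_neg ha, if_neg hb, sub_zero]

theorem edgeVec_dotProduct_one (a b : ι) : edgeVec a b ⬝ᵥ (1 : ι → R) = 0 := by
  simp [edgeVec, sub_dotProduct, single_dotProduct]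

theorem sum_edgeVec (a b : ι) : ∑ i, edgeVec a b i = (0 : R) := by
  simpa [dotProduct_one] using edgeVec_dotProduct_one (R := R) a b

theorem edgeVec_dotProduct_self {a b : ι} (hab : a ≠ b) :
    edgeVec a b ⬝ᵥ edgeVec a b = (2 : R) := by
  nth_rw 2 [edgeVec]
  rw [dotProduct_sub, edgeVec_dotProduct_single, edgeVec_dotProduct_single]
  simp [hab, hab.symm, one_add_one_eq_two]

theorem edgeVec_dotProduct_single_add_single (a b : ι) :
    edgeVec a b ⬝ᵥ (Pi.single a 1 + Pi.single b 1 : ι → R) = 0 := by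
  rw [dotProduct_add, edgeVec_dotProduct_single, edgeVec_dotProduct_single]
  by_cases hab : a = b <;> simp [hab, eq_comm]

theorem completeMinusLaplacian_mulVec (F : Finset (ι × ι)) (x : ι → R) :
    completeMinusLaplacian F *ᵥ x = (Fintype.card ι : R) • x - (∑ i, x i) • 1 -
      ∑ f ∈ F, (edgeVec f.1 f.2 ⬝ᵥ x) • edgeVec f.1 f.2 := by
  rw [completeMinusLaplacian, sub_mulVec, sub_mulVec, smul_mulVec, one_mulVec, sum_mulVec]
  congr 2
  · ext i
    simp [mulVec, dotProduct]
  · simp [vecMulVec_mulVec]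

theorem completeMinusLaplacian_mulVec_one (F : Finset (ι × ι)) :
    completeMinusLaplacian F *ᵥ (1 : ι → R) = 0 := by
  simp [completeMinusLaplacian_mulVec, edgeVec_dotProduct_one]

theorem completeMinusLaplacian_mulVec_of_orthogonal {F : Finset (ι × ι)} {x : ι → R}
    (hsum : ∑ i, x i = 0) (horth : ∀ f ∈ F, edgeVec f.1 f.2 ⬝ᵥ x = 0) :
    completeMinusLaplacian F *ᵥ x = (Fintype.card ι : R) • x := by
  rw [completeMinusLaplacian_mulVec, hsum,
    Finset.sum_eq_zero fun f hf => by rw [horth f hf, zero_smul]]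
  simp

theorem completeMinusLaplacian_mulVec_edgeVec {F : Finset (ι × ι)} {e : ι × ι} (he : e ∈ F)
    (hne : e.1 ≠ e.2)
    (hdisj : ∀ f ∈ F, f ≠ e → e.1 ≠ f.1 ∧ e.1 ≠ f.2 ∧ e.2 ≠ f.1 ∧ e.2 ≠ f.2) :
    (completeMinusLaplacian F : Matrix ι ι R) *ᵥ edgeVec e.1 e.2 =
      ((Fintype.card ι : R) - 2) • edgeVec e.1 e.2 := by
  have hproj : ∑ f ∈ F, (edgeVec f.1 f.2 ⬝ᵥ edgeVec e.1 e.2 : R) • (edgeVec f.1 f.2 : ι → R) =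
      (2 : R) • edgeVec e.1 e.2 := by
    rw [Finset.sum_eq_single_of_mem e he, edgeVec_dotProduct_self hne]
    intro f hf hfe
    obtain ⟨h1, h2, h3, h4⟩ := hdisj f hf hfe
    nth_rw 2 [edgeVec]
    rw [dotProduct_sub, edgeVec_dotProduct_single_of_ne h1 h2,
      edgeVec_dotProduct_single_of_ne h3 h4, sub_zero, zero_smul]
  rw [completeMinusLaplacian_mulVec, sum_edgeVec, hproj]
  module

theorem completeMinusLaplacian_mulVec_card_smul_single_add_single_sub {F : Finset (ι × ι)}
    {e : ι × ι} (hdisj : ∀ f ∈ F, f ≠ e → e.1 ≠ f.1 ∧ e.1 ≠ f.2 ∧ e.2 ≠ f.1 ∧ e.2 ≠ f.2) :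
    completeMinusLaplacian F *ᵥ
        ((Fintype.card ι : R) • (Pi.single e.1 1 + Pi.single e.2 1) - (2 : R) • (1 : ι → R)) =
      (Fintype.card ι : R) •
        ((Fintype.card ι : R) • (Pi.single e.1 1 + Pi.single e.2 1) - (2 : R) • (1 : ι → R)) := by
  apply completeMinusLaplacian_mulVec_of_orthogonal
  · simp [Finset.sum_add_distrib, ← Finset.mul_sum]
    ring
  · intro f hf
    rw [dotProduct_sub, dotProduct_smul, dotProduct_smul, edgeVec_dotProduct_one, smul_zero,
      sub_zero]
    rcases eq_or_ne f e with rfl | hfe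
    · rw [edgeVec_dotProduct_single_add_single, smul_zero]
    · obtain ⟨h1, h2, h3, h4⟩ := hdisj f hf hfe
      rw [dotProduct_add, edgeVec_dotProduct_single_of_ne h1 h2,
        edgeVec_dotProduct_single_of_ne h3 h4, add_zero, smul_zero]

end Laplacian

section StateTransfer

variable {ι : Type*} [Fintype ι] [DecidableEq ι] {F : Finset (ι × ι)} {e : ι × ι}

theorem exp_completeMinusLaplacian_mulVec_single_add_single (hn : 4 ∣ Fintype.card ι)
    (hdisj : ∀ f ∈ F, f ≠ e → e.1 ≠ f.1 ∧ e.1 ≠ f.2 ∧ e.2 ≠ f.1 ∧ e.2 ≠ f.2) :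
    NormedSpace.exp (-(I * (Real.pi / 2)) • completeMinusLaplacian F) *ᵥ
        (Pi.single e.1 1 + Pi.single e.2 1) = (Pi.single e.1 1 + Pi.single e.2 1 : ι → ℂ) := by
  set U := NormedSpace.exp (-(I * (Real.pi / 2)) • (completeMinusLaplacian F : Matrix ι ι ℂ))
  set p : ι → ℂ := Pi.single e.1 1 + Pi.single e.2 1
  set c : ℂ := (Fintype.card ι : ℂ)
  have hc : c ≠ 0 := Nat.cast_ne_zero.2 (Fintype.card_pos_iff.2 ⟨e.1⟩).ne'
  have hone : U *ᵥ 1 = 1 := by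
    rw [exp_smul_mulVec_of_mulVec_eq_smul (μ := 0)
      (by rw [completeMinusLaplacian_mulVec_one, zero_smul]), mul_zero, NormedSpace.exp_zero,
      one_smul]
  have hw : U *ᵥ (c • p - (2 : ℂ) • 1) = c • p - (2 : ℂ) • 1 := by
    rw [exp_smul_mulVec_of_mulVec_eq_smul
      (completeMinusLaplacian_mulVec_card_smul_single_add_single_sub hdisj), ← exp_eq_exp_ℂ,
      exp_neg_I_pi_div_two_mul_natCast hn, one_smul]
  -- `p` itself is no eigenvector, but `c • p` splits into eigenvectors for `n` and `0`.
  apply smul_right_injective _ hc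
  calc c • (U *ᵥ p) = U *ᵥ (c • p - (2 : ℂ) • 1) + (2 : ℂ) • (U *ᵥ 1) := by
        rw [← mulVec_smul, ← mulVec_smul, ← mulVec_add, sub_add_cancel]
    _ = c • p := by rw [hw, hone, sub_add_cancel]

theorem exp_completeMinusLaplacian_mulVec_edgeVec (hn : 4 ∣ Fintype.card ι) (he : e ∈ F)
    (hne : e.1 ≠ e.2)
    (hdisj : ∀ f ∈ F, f ≠ e → e.1 ≠ f.1 ∧ e.1 ≠ f.2 ∧ e.2 ≠ f.1 ∧ e.2 ≠ f.2) :
    NormedSpace.exp (-(I * (Real.pi / 2)) • completeMinusLaplacian F) *ᵥ edgeVec e.1 e.2 =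
      -(edgeVec e.1 e.2 : ι → ℂ) := by
  rw [exp_smul_mulVec_of_mulVec_eq_smul (completeMinusLaplacian_mulVec_edgeVec he hne hdisj),
    ← exp_eq_exp_ℂ, exp_neg_I_pi_div_two_mul_natCast_sub_two hn, neg_one_smul]

end StateTransfer

/-- Let `4 ∣ n` and let `F` be a matching of `K_n` (pairwise vertex-disjoint
edges). Deleting the edges of `F` from `K_n` yields Laplacian perfect state
transfer at time `π/2` between the endpoints of every deleted edge. -/
theorem complete_graph_minus_matching_pst {n : ℕ} (hn : 4 ∣ n)
    (F : Finset (Fin n × Fin n))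
    (hF : ∀ e ∈ F, e.1 ≠ e.2)
    (hdisj : ∀ e ∈ F, ∀ f ∈ F, e ≠ f →
      e.1 ≠ f.1 ∧ e.1 ≠ f.2 ∧ e.2 ≠ f.1 ∧ e.2 ≠ f.2) :
    let L' : Matrix (Fin n) (Fin n) ℂ :=
      ((n : ℂ) • 1 - Matrix.of fun _ _ => (1 : ℂ)) -
        ∑ e ∈ F, vecMulVec (Pi.single e.1 1 - Pi.single e.2 1)
          (Pi.single e.1 1 - Pi.single e.2 1)
    ∀ e ∈ F, ∃ γ : ℂ, ‖γ‖ = 1 ∧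
      NormedSpace.exp ((-(I * (Real.pi / 2))) • L') *ᵥ Pi.single e.1 1 =
        γ • (Pi.single e.2 1 : Fin n → ℂ) := by
  intro L' e he
  have hL : L' = completeMinusLaplacian F := by
    simp only [L', completeMinusLaplacian, edgeVec, Fintype.card_fin]
  have hcard : 4 ∣ Fintype.card (Fin n) := by rwa [Fintype.card_fin]
  have hdisj_e : ∀ f ∈ F, f ≠ e → e.1 ≠ f.1 ∧ e.1 ≠ f.2 ∧ e.2 ≠ f.1 ∧ e.2 ≠ f.2 :=
    fun f hf hfe => hdisj e he f hf hfe.symm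
  refine ⟨1, norm_one, ?_⟩
  rw [one_smul, hL]
  exact mulVec_eq_of_mulVec_add_of_mulVec_sub_s14
    (exp_completeMinusLaplacian_mulVec_single_add_single hcard hdisj_e)
    (exp_completeMinusLaplacian_mulVec_edgeVec hcard he (hF e he) hdisj_e)
end
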